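/- Let Ω be a Polish space and P a weakly relatively compact set of Borel probability measures. Then there exists a countable subset {P_n : n ∈ ℕ} ⊆ P such that for every X ∈ L^1(c_{p,P}) and every p ∈ [1,∞), c_{p,P}(X) = sup_{n∈ℕ} E_{P_n}(|X|^p)^{1/p}; in particular the capacities c_{p,P} and c_{p,{P_n}} coincide and L^1(c_{p,P}) = L^1(c_{p,{P_n}}). -/

import Mathlib

/-!
On `L¹(c_{p,P})` the extended capacity is still given by its defining formula
`c(X) = sup_{Q ∈ P} ‖X‖_{L^p(Q)}`: the lower bound holds for every `X` because a non-negative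
lower semicontinuous function is the increasing limit of bounded Lipschitz functions, and the
upper bound passes to `c`-limits of `C_b` functions by Minkowski's inequality. It therefore
suffices to find `Pₙ ∈ P` with `sup_{Q ∈ P} ‖φ‖_{L^p(Q)} = sup_n ‖φ‖_{L^p(Pₙ)}` for `φ ∈ C_b`.
As `Q ↦ ‖φ‖_{L^p(Q)}` is weakly continuous, any weakly dense sequence in `P` does, and one exists:
the weak closure of `P` is compact and the weak topology on probability measures over a Polish
space is metrizable (Lévy–Prokhorov), so `P` is separable.
-/

open Filter MeasureTheory Topology
open scoped ENNReal

/-- The lattice `C_b(Ω)` of bounded continuous real functions. -/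
def Cb (Ω : Type) [TopologicalSpace Ω] : Set (Ω → ℝ) :=
  {f | Continuous f ∧ ∃ M : ℝ, ∀ x, |f x| ≤ M}

/-- The capacity `c_{p,Ps}(f) = sup_{Q ∈ Ps} E_Q(|f|^p)^{1/p}` on `C_b(Ω)`. -/
noncomputable def cpCb {Ω : Type} [TopologicalSpace Ω] [MeasurableSpace Ω]
    (Ps : Set (Measure Ω)) (p : ℝ) (f : Ω → ℝ) : ℝ≥0∞ :=
  ⨆ Q ∈ Ps, (∫⁻ x, (ENNReal.ofReal |f x|) ^ p ∂Q) ^ (1 / p)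

/-- Extension of `c_{p,Ps}` to non-negative lower semicontinuous functions:
`c(f) = sup {c(φ) : 0 ≤ φ ≤ f, φ ∈ C_b(Ω)}`. -/
noncomputable def cpLsc {Ω : Type} [TopologicalSpace Ω] [MeasurableSpace Ω]
    (Ps : Set (Measure Ω)) (p : ℝ) (f : Ω → ℝ) : ℝ≥0∞ :=
  ⨆ φ ∈ {φ : Ω → ℝ | φ ∈ Cb Ω ∧ ∀ x, 0 ≤ φ x ∧ φ x ≤ f x}, cpCb Ps p φ

/-- Extension of `c_{p,Ps}` to arbitrary functions:
`c(g) = inf {c(f) : f ≥ |g|, f lower semicontinuous}`. -/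
noncomputable def cpExt {Ω : Type} [TopologicalSpace Ω] [MeasurableSpace Ω]
    (Ps : Set (Measure Ω)) (p : ℝ) (g : Ω → ℝ) : ℝ≥0∞ :=
  ⨅ f ∈ {f : Ω → ℝ | LowerSemicontinuous f ∧ ∀ x, |g x| ≤ f x}, cpLsc Ps p f

/-- Membership in `L^1(c)` for an `ℝ≥0∞`-valued capacity `c`: `g` is a `c`-limit of
bounded continuous functions. -/
def MemL1e {Ω : Type} [TopologicalSpace Ω] (c : (Ω → ℝ) → ℝ≥0∞) (g : Ω → ℝ) : Prop :=
  ∃ f : ℕ → Ω → ℝ, (∀ n, f n ∈ Cb Ω) ∧ Tendsto (fun n => c (g - f n)) atTop (𝓝 0)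

/-- The weak topology on measures: the coarsest topology making `μ ↦ ∫ f dμ` continuous
for every bounded continuous `f`. -/
noncomputable def WeakTop (Ω : Type) [TopologicalSpace Ω] [MeasurableSpace Ω] :
    TopologicalSpace (Measure Ω) :=
  TopologicalSpace.induced
    (fun μ => fun f : {g : Ω → ℝ // g ∈ Cb Ω} => ∫ x, f.1 x ∂μ) inferInstance

open TopologicalSpace Set BoundedContinuousFunction

theorem iSup₂_le_iSup₂_of_subset_closure {X α : Type*} [TopologicalSpace X] [CompleteLattice α]
    [TopologicalSpace α] [ClosedIicTopology α] {L : X → α} (hL : Continuous L) {s t : Set X}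
    (hst : s ⊆ closure t) : ⨆ x ∈ s, L x ≤ ⨆ x ∈ t, L x :=
  iSup₂_le fun _ hx => closure_minimal (fun y hy => le_iSup₂ (f := fun y _ => L y) y hy)
    (isClosed_Iic.preimage hL) (hst hx)

theorem abs_le_abs_add_abs_max_sub (a b : ℝ) : |a| ≤ |b| + |max (|a| - b) 0| := by
  rw [abs_of_nonneg (le_max_right (|a| - b) 0)]
  linarith [le_max_left (|a| - b) 0, le_abs_self b]

section LipschitzMinorant

variable {Ω : Type*} [PseudoMetricSpace Ω] {f : Ω → ℝ}

-- Capping `f` at `k` keeps the approximants bounded, so that they lie in `C_b`.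
noncomputable def lipschitzMinorant (f : Ω → ℝ) (k : ℕ) (x : Ω) : ℝ :=
  ⨅ y, (min (f y) k + k * dist x y)

theorem min_add_mul_dist_nonneg (hf0 : 0 ≤ f) (k : ℕ) (x y : Ω) :
    0 ≤ min (f y) k + k * dist x y :=
  add_nonneg (le_min (hf0 y) k.cast_nonneg) (by positivity)

theorem lipschitzMinorant_nonneg (hf0 : 0 ≤ f) (k : ℕ) : 0 ≤ lipschitzMinorant f k :=
  fun x => Real.iInf_nonneg (min_add_mul_dist_nonneg hf0 k x)

theorem lipschitzMinorant_le (hf0 : 0 ≤ f) (k : ℕ) (x y : Ω) :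
    lipschitzMinorant f k x ≤ min (f y) k + k * dist x y :=
  ciInf_le ⟨0, by rintro _ ⟨z, rfl⟩; exact min_add_mul_dist_nonneg hf0 k x z⟩ y

theorem lipschitzMinorant_le_min (hf0 : 0 ≤ f) (k : ℕ) (x : Ω) :
    lipschitzMinorant f k x ≤ min (f x) k := by
  simpa using lipschitzMinorant_le hf0 k x x

theorem lipschitzWith_lipschitzMinorant (hf0 : 0 ≤ f) (k : ℕ) :
    LipschitzWith k (lipschitzMinorant f k) := by
  refine LipschitzWith.of_le_add_mul k fun x y => ?_
  have : Nonempty Ω := ⟨x⟩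
  rw [← sub_le_iff_le_add]
  refine le_ciInf fun z => ?_
  have hxz := lipschitzMinorant_le hf0 k x z
  have htri : (k : ℝ) * dist x z ≤ k * dist y z + k * dist x y := by
    rw [← mul_add, add_comm]; gcongr; exact dist_triangle x y z
  push_cast
  linarith

theorem monotone_lipschitzMinorant (hf0 : 0 ≤ f) : Monotone (lipschitzMinorant f) := by
  intro k l hkl x
  have : Nonempty Ω := ⟨x⟩
  refine ciInf_mono ⟨0, by rintro _ ⟨z, rfl⟩; exact min_add_mul_dist_nonneg hf0 k x z⟩
    fun y => ?_
  have : (k : ℝ) ≤ l := by exact_mod_cast hkl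
  gcongr

theorem tendsto_lipschitzMinorant (hf : LowerSemicontinuous f) (hf0 : 0 ≤ f) (x : Ω) :
    Tendsto (fun k => lipschitzMinorant f k x) atTop (𝓝 (f x)) := by
  refine tendsto_order.2 ⟨fun c hc => ?_, fun c hc => Eventually.of_forall fun k =>
    ((lipschitzMinorant_le_min hf0 k x).trans (min_le_left _ _)).trans_lt hc⟩
  have : Nonempty Ω := ⟨x⟩
  obtain ⟨c', hcc', hc'⟩ := exists_between hc
  obtain ⟨δ, hδ, hball⟩ := Metric.eventually_nhds_iff.1 (hf x c' hc')
  refine eventually_atTop.2 ⟨⌈max c' (c' / δ)⌉₊, fun k hk => hcc'.trans_le (le_ciInf fun y => ?_)⟩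
  have hk' := Nat.ceil_le.1 hk
  have hkd : (0 : ℝ) ≤ k * dist x y := by positivity
  rcases lt_or_ge (dist y x) δ with hy | hy
  · have : c' ≤ min (f y) k := le_min (hball hy).le ((le_max_left _ _).trans hk')
    linarith
  · have h1 : c' ≤ k * δ := (div_le_iff₀ hδ).1 ((le_max_right _ _).trans hk')
    have h2 : (k : ℝ) * δ ≤ k * dist x y := by rw [dist_comm]; gcongr
    have h3 : (0 : ℝ) ≤ min (f y) k := le_min (hf0 y) k.cast_nonneg
    linarith

end LipschitzMinorant

theorem lipschitzMinorant_mem_Cb {Ω : Type} [PseudoMetricSpace Ω] {f : Ω → ℝ} (hf0 : 0 ≤ f)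
    (k : ℕ) : lipschitzMinorant f k ∈ Cb Ω := by
  refine ⟨(lipschitzWith_lipschitzMinorant hf0 k).continuous, k, fun x => ?_⟩
  rw [abs_of_nonneg (lipschitzMinorant_nonneg hf0 k x)]
  exact (lipschitzMinorant_le_min hf0 k x).trans (min_le_right _ _)

theorem eLpNorm'_le_add_of_abs_le {α : Type*} [MeasurableSpace α] {μ : Measure α} {p : ℝ}
    (hp : 1 ≤ p) {f g h : α → ℝ} (hg : AEStronglyMeasurable g μ) (hh : AEStronglyMeasurable h μ)
    (hfgh : ∀ x, |f x| ≤ |g x| + |h x|) :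
    eLpNorm' f p μ ≤ eLpNorm' g p μ + eLpNorm' h p μ :=
  calc eLpNorm' f p μ ≤ eLpNorm' (fun x => ‖g x‖ + ‖h x‖) p μ :=
        eLpNorm'_mono_ae (by linarith) (ae_of_all _ fun x => by
          simpa [Real.norm_eq_abs, abs_of_nonneg (add_nonneg (abs_nonneg (g x)) (abs_nonneg (h x)))]
            using hfgh x)
    _ ≤ eLpNorm' (fun x => ‖g x‖) p μ + eLpNorm' (fun x => ‖h x‖) p μ :=
        eLpNorm'_add_le hg.norm hh.norm hp
    _ = eLpNorm' g p μ + eLpNorm' h p μ := by rw [eLpNorm'_norm, eLpNorm'_norm]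

theorem tendsto_eLpNorm'_of_monotone {α : Type*} [MeasurableSpace α] {μ : Measure α} {p : ℝ}
    (hp : 0 < p) {φ : ℕ → α → ℝ} {f : α → ℝ} (hφ : ∀ k, AEStronglyMeasurable (φ k) μ)
    (hφ0 : ∀ k, 0 ≤ φ k) (hmono : Monotone φ) (hlim : ∀ x, Tendsto (φ · x) atTop (𝓝 (f x))) :
    Tendsto (fun k => eLpNorm' (φ k) p μ) atTop (𝓝 (eLpNorm' f p μ)) := by
  have hcont : Continuous fun r : ℝ => ‖r‖ₑ ^ p :=
    ENNReal.continuous_rpow_const.comp continuous_enorm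
  refine (ENNReal.continuous_rpow_const.tendsto _).comp
    (lintegral_tendsto_of_tendsto_of_monotone (fun k => (hφ k).enorm.pow_const p)
      (ae_of_all _ fun x k l hkl => ?_) (ae_of_all _ fun x => (hcont.tendsto _).comp (hlim x)))
  simp only [Real.enorm_of_nonneg (hφ0 k x), Real.enorm_of_nonneg (hφ0 l x)]
  gcongr
  exact hmono hkl x

section Capacity

variable {Ω : Type} [TopologicalSpace Ω] [MeasurableSpace Ω] {Ps Ps' : Set (Measure Ω)} {p : ℝ}

theorem cpCb_eq_iSup_eLpNorm' (Ps : Set (Measure Ω)) (p : ℝ) (f : Ω → ℝ) :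
    cpCb Ps p f = ⨆ Q ∈ Ps, eLpNorm' f p Q := by
  simp only [cpCb, eLpNorm', Real.enorm_eq_ofReal_abs]

theorem eLpNorm'_le_cpCb {Q : Measure Ω} (hQ : Q ∈ Ps) (f : Ω → ℝ) :
    eLpNorm' f p Q ≤ cpCb Ps p f := by
  rw [cpCb_eq_iSup_eLpNorm']
  exact le_iSup₂ (f := fun Q _ => eLpNorm' f p Q) Q hQ

theorem cpCb_mono (h : Ps ⊆ Ps') (f : Ω → ℝ) : cpCb Ps p f ≤ cpCb Ps' p f :=
  biSup_mono h

theorem cpCb_le_cpLsc {φ f : Ω → ℝ} (hφ : φ ∈ Cb Ω) (hφ0 : 0 ≤ φ) (hφf : φ ≤ f) :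
    cpCb Ps p φ ≤ cpLsc Ps p f :=
  le_iSup₂ (f := fun φ (_ : φ ∈ {φ | φ ∈ Cb Ω ∧ ∀ x, 0 ≤ φ x ∧ φ x ≤ f x}) => cpCb Ps p φ) φ
    ⟨hφ, fun x => ⟨hφ0 x, hφf x⟩⟩

theorem cpExt_le_cpLsc {g f : Ω → ℝ} (hf : LowerSemicontinuous f) (hgf : ∀ x, |g x| ≤ f x) :
    cpExt Ps p g ≤ cpLsc Ps p f :=
  iInf₂_le f ⟨hf, hgf⟩

theorem le_cpExt_add {g : Ω → ℝ} {a b : ℝ≥0∞}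
    (h : ∀ f, LowerSemicontinuous f → (∀ x, |g x| ≤ f x) → a ≤ cpLsc Ps p f + b) :
    a ≤ cpExt Ps p g + b := by
  rw [cpExt, ENNReal.iInf_add]
  exact le_iInf fun f => by rw [ENNReal.iInf_add]; exact le_iInf fun hf => h f hf.1 hf.2

theorem cpExt_congr (h : ∀ φ ∈ Cb Ω, cpCb Ps p φ = cpCb Ps' p φ) :
    cpExt Ps p = cpExt Ps' p := by
  have hLsc : cpLsc Ps p = cpLsc Ps' p := funext fun f =>
    iSup_congr fun φ => iSup_congr fun hφ => h φ hφ.1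
  funext g
  simp only [cpExt, hLsc]

theorem cpCb_le_add (hp : 1 ≤ p) {f g h : Ω → ℝ} (hg : Measurable g) (hh : Measurable h)
    (hfgh : ∀ x, |f x| ≤ |g x| + |h x|) : cpCb Ps p f ≤ cpCb Ps p g + cpCb Ps p h := by
  rw [cpCb_eq_iSup_eLpNorm']
  exact iSup₂_le fun Q hQ => (eLpNorm'_le_add_of_abs_le hp hg.aestronglyMeasurable
    hh.aestronglyMeasurable hfgh).trans (add_le_add (eLpNorm'_le_cpCb hQ g) (eLpNorm'_le_cpCb hQ h))

variable [OpensMeasurableSpace Ω]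

theorem eLpNorm'_le_cpLsc [PseudoMetrizableSpace Ω] (hp : 0 < p) {Q : Measure Ω} (hQ : Q ∈ Ps)
    {f : Ω → ℝ} (hf : LowerSemicontinuous f) (hf0 : 0 ≤ f) : eLpNorm' f p Q ≤ cpLsc Ps p f := by
  let := pseudoMetrizableSpacePseudoMetric Ω
  refine le_of_tendsto' (tendsto_eLpNorm'_of_monotone hp
    (fun k => (lipschitzWith_lipschitzMinorant hf0 k).continuous.aestronglyMeasurable)
    (lipschitzMinorant_nonneg hf0) (monotone_lipschitzMinorant hf0)
    (tendsto_lipschitzMinorant hf hf0)) fun k => ?_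
  exact (eLpNorm'_le_cpCb hQ _).trans (cpCb_le_cpLsc (lipschitzMinorant_mem_Cb hf0 k)
    (lipschitzMinorant_nonneg hf0 k) fun x =>
      (lipschitzMinorant_le_min hf0 k x).trans (min_le_left _ _))

theorem eLpNorm'_le_cpExt [PseudoMetrizableSpace Ω] (hp : 0 < p) {Q : Measure Ω} (hQ : Q ∈ Ps)
    (g : Ω → ℝ) : eLpNorm' g p Q ≤ cpExt Ps p g := by
  refine le_iInf₂ fun f ⟨hf, hgf⟩ => ?_
  have hf0 : 0 ≤ f := fun x => (abs_nonneg _).trans (hgf x)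
  refine (eLpNorm'_mono_ae hp.le (ae_of_all _ fun x => ?_)).trans (eLpNorm'_le_cpLsc hp hQ hf hf0)
  rw [Real.norm_eq_abs, Real.norm_eq_abs, abs_of_nonneg (hf0 x)]
  exact hgf x

theorem cpCb_le_cpExt [PseudoMetrizableSpace Ω] (hp : 0 < p) (g : Ω → ℝ) :
    cpCb Ps p g ≤ cpExt Ps p g := by
  rw [cpCb_eq_iSup_eLpNorm']
  exact iSup₂_le fun Q hQ => eLpNorm'_le_cpExt hp hQ g

theorem cpExt_add_le (hp : 1 ≤ p) (g : Ω → ℝ) {φ : Ω → ℝ} (hφ : φ ∈ Cb Ω) :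
    cpExt Ps p (g + φ) ≤ cpExt Ps p g + cpCb Ps p φ := by
  refine le_cpExt_add fun f hf hgf => ?_
  have hf0 : 0 ≤ f := fun x => (abs_nonneg _).trans (hgf x)
  refine (cpExt_le_cpLsc (f := fun x => f x + |φ x|) (hf.add hφ.1.abs.lowerSemicontinuous)
    fun x => (abs_add_le _ _).trans (add_le_add (hgf x) le_rfl)).trans (iSup₂_le ?_)
  rintro ψ ⟨⟨hψ, M, hM⟩, hψf⟩
  set ψ' : Ω → ℝ := fun x => max (|ψ x| - |φ x|) 0
  have hψ'c : Continuous ψ' := (hψ.abs.sub hφ.1.abs).max continuous_const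
  have hψ'0 : 0 ≤ ψ' := fun x => le_max_right _ _
  have hψ'Cb : ψ' ∈ Cb Ω := by
    refine ⟨hψ'c, M, fun x => ?_⟩
    rw [abs_of_nonneg (hψ'0 x)]
    exact max_le (by linarith [hM x, abs_nonneg (φ x)]) ((abs_nonneg _).trans (hM x))
  have hψ'f : ψ' ≤ f := fun x => max_le (by
    linarith [(hψf x).2, abs_of_nonneg (hψf x).1]) (hf0 x)
  calc cpCb Ps p ψ ≤ cpCb Ps p ψ' + cpCb Ps p φ := cpCb_le_add hp hψ'c.measurable
        hφ.1.measurable fun x => by simpa [add_comm] using abs_le_abs_add_abs_max_sub (ψ x) |φ x|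
    _ ≤ cpLsc Ps p f + cpCb Ps p φ := by gcongr; exact cpCb_le_cpLsc hψ'Cb hψ'0 hψ'f

theorem cpCb_le_cpExt_sub_add [PseudoMetrizableSpace Ω] (hp : 1 ≤ p) {φ : Ω → ℝ}
    (hφ : φ ∈ Cb Ω) (X : Ω → ℝ) : cpCb Ps p φ ≤ cpExt Ps p (X - φ) + cpCb Ps p X := by
  refine le_cpExt_add fun u hu hXu => ?_
  have hu0 : 0 ≤ u := fun x => (abs_nonneg _).trans (hXu x)
  set w : Ω → ℝ := fun x => max (|φ x| - u x) 0
  have hwX : ∀ x, ‖w x‖ ≤ ‖X x‖ := fun x => by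
    have := hXu x
    rw [Pi.sub_apply, abs_sub_comm] at this
    rw [Real.norm_eq_abs, Real.norm_eq_abs, abs_of_nonneg (le_max_right _ _)]
    exact max_le (by linarith [abs_sub_abs_le_abs_sub (φ x) (X x)]) (abs_nonneg _)
  have hw : Measurable w := (hφ.1.measurable.abs.sub hu.measurable).max measurable_const
  rw [cpCb_eq_iSup_eLpNorm' Ps p φ]
  refine iSup₂_le fun Q hQ => ?_
  calc eLpNorm' φ p Q ≤ eLpNorm' u p Q + eLpNorm' w p Q :=
        eLpNorm'_le_add_of_abs_le hp hu.measurable.aestronglyMeasurable hw.aestronglyMeasurable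
          fun x => by simpa [abs_of_nonneg (hu0 x)] using abs_le_abs_add_abs_max_sub (φ x) (u x)
    _ ≤ cpLsc Ps p u + cpCb Ps p X :=
        add_le_add (eLpNorm'_le_cpLsc (by linarith) hQ hu hu0)
          ((eLpNorm'_mono_ae (by linarith) (ae_of_all _ hwX)).trans (eLpNorm'_le_cpCb hQ X))

theorem cpExt_le_two_mul_add [PseudoMetrizableSpace Ω] (hp : 1 ≤ p) {φ : Ω → ℝ}
    (hφ : φ ∈ Cb Ω) (X : Ω → ℝ) : cpExt Ps p X ≤ 2 * cpExt Ps p (X - φ) + cpCb Ps p X :=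
  calc cpExt Ps p X = cpExt Ps p (X - φ + φ) := by rw [sub_add_cancel]
    _ ≤ cpExt Ps p (X - φ) + cpCb Ps p φ := cpExt_add_le hp _ hφ
    _ ≤ cpExt Ps p (X - φ) + (cpExt Ps p (X - φ) + cpCb Ps p X) := by
        gcongr; exact cpCb_le_cpExt_sub_add hp hφ X
    _ = 2 * cpExt Ps p (X - φ) + cpCb Ps p X := by rw [two_mul, add_assoc]

theorem cpExt_eq_cpCb_of_memL1e [PseudoMetrizableSpace Ω] (hp : 1 ≤ p) {X : Ω → ℝ}
    (hX : MemL1e (cpExt Ps p) X) : cpExt Ps p X = cpCb Ps p X := by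
  obtain ⟨φ, hφ, hlim⟩ := hX
  have hbound : Tendsto (fun n => 2 * cpExt Ps p (X - φ n) + cpCb Ps p X) atTop
      (𝓝 (cpCb Ps p X)) := by
    simpa using (ENNReal.Tendsto.const_mul hlim (Or.inr ENNReal.ofNat_ne_top)).add_const _
  exact le_antisymm (ge_of_tendsto' hbound fun n => cpExt_le_two_mul_add hp (hφ n) X)
    (cpCb_le_cpExt (by linarith) X)

end Capacity

section WeakTopology

variable {Ω : Type} [TopologicalSpace Ω] {p : ℝ}

theorem exists_boundedContinuousFunction_eq {f : Ω → ℝ} (hf : f ∈ Cb Ω) :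
    ∃ F : Ω →ᵇ ℝ, ⇑F = f :=
  ⟨.ofNormedAddCommGroup f hf.1 _ hf.2.choose_spec, rfl⟩

theorem abs_rpow_mem_Cb {φ : Ω → ℝ} (hφ : φ ∈ Cb Ω) (hp : 0 ≤ p) :
    (fun x => |φ x| ^ p) ∈ Cb Ω := by
  obtain ⟨hc, M, hM⟩ := hφ
  refine ⟨(Real.continuous_rpow_const hp).comp hc.abs, M ^ p, fun x => ?_⟩
  rw [abs_of_nonneg (by positivity)]
  exact Real.rpow_le_rpow (abs_nonneg _) (hM x) hp

variable [MeasurableSpace Ω]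

theorem eLpNorm'_eq_ofReal_integral [OpensMeasurableSpace Ω] {φ : Ω → ℝ} (hφ : φ ∈ Cb Ω)
    (hp : 0 < p) (μ : Measure Ω) [IsFiniteMeasure μ] :
    eLpNorm' φ p μ = ENNReal.ofReal (∫ x, |φ x| ^ p ∂μ) ^ (1 / p) := by
  obtain ⟨F, hF⟩ := exists_boundedContinuousFunction_eq (abs_rpow_mem_Cb hφ hp.le)
  rw [eLpNorm', ofReal_integral_eq_lintegral_ofReal (by simpa [← hF] using F.integrable μ)
    (ae_of_all _ fun x => by positivity)]
  simp only [Real.enorm_eq_ofReal_abs, ENNReal.ofReal_rpow_of_nonneg (abs_nonneg _) hp.le]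

theorem continuous_eLpNorm' [OpensMeasurableSpace Ω] {φ : Ω → ℝ} (hφ : φ ∈ Cb Ω) (hp : 0 < p) :
    Continuous fun μ : ProbabilityMeasure Ω => eLpNorm' φ p (μ : Measure Ω) := by
  obtain ⟨F, hF⟩ := exists_boundedContinuousFunction_eq (abs_rpow_mem_Cb hφ hp.le)
  simp only [eLpNorm'_eq_ofReal_integral hφ hp, ← hF]
  exact ENNReal.continuous_rpow_const.comp (ENNReal.continuous_ofReal.comp
    (ProbabilityMeasure.continuous_integral_boundedContinuousFunction F))

theorem cpCb_image_le_of_subset_closure [OpensMeasurableSpace Ω]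
    {S T : Set (ProbabilityMeasure Ω)} (hST : S ⊆ closure T) (hp : 0 < p) {φ : Ω → ℝ}
    (hφ : φ ∈ Cb Ω) : cpCb ((↑) '' S) p φ ≤ cpCb ((↑) '' T) p φ := by
  simp only [cpCb_eq_iSup_eLpNorm', iSup_image]
  exact iSup₂_le_iSup₂_of_subset_closure (continuous_eLpNorm' hφ hp) hST

theorem continuous_integral_weakTop {f : Ω → ℝ} (hf : f ∈ Cb Ω) :
    Continuous[WeakTop Ω, _] fun μ : Measure Ω => ∫ x, f x ∂μ := by
  let := WeakTop Ω
  have h : Continuous fun μ : Measure Ω => fun g : {g // g ∈ Cb Ω} => ∫ x, g.1 x ∂μ :=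
    continuous_induced_dom
  exact (continuous_apply ⟨f, hf⟩).comp h

theorem isClosed_setOf_isProbabilityMeasure :
    IsClosed[WeakTop Ω] {μ : Measure Ω | IsProbabilityMeasure μ} := by
  let := WeakTop Ω
  have h1 : (fun _ : Ω => (1 : ℝ)) ∈ Cb Ω := ⟨continuous_const, 1, fun _ => by norm_num⟩
  convert isClosed_eq (continuous_integral_weakTop h1)
    (continuous_const : Continuous fun _ : Measure Ω => (1 : ℝ)) using 1
  ext μ
  simp [isProbabilityMeasure_iff, measureReal_def, ENNReal.toReal_eq_one_iff]

theorem isSeparable_of_isCompact_closure [PseudoMetrizableSpace Ω] [SeparableSpace Ω]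
    [OpensMeasurableSpace Ω] {Ps : Set (Measure Ω)} (hprob : ∀ Q ∈ Ps, IsProbabilityMeasure Q)
    (hcomp : @IsCompact _ (WeakTop Ω) (@closure _ (WeakTop Ω) Ps)) :
    IsSeparable {μ : ProbabilityMeasure Ω | (μ : Measure Ω) ∈ Ps} := by
  let := WeakTop Ω
  have hK : ∀ μ ∈ closure Ps, IsProbabilityMeasure μ :=
    fun μ hμ => closure_minimal hprob isClosed_setOf_isProbabilityMeasure hμ
  have := isCompact_iff_compactSpace.mp hcomp
  let ι : closure Ps → ProbabilityMeasure Ω := fun μ => ⟨μ, hK μ μ.2⟩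
  have hι : Continuous ι := ProbabilityMeasure.continuous_iff_forall_continuous_integral.2
    fun F => (continuous_integral_weakTop ⟨F.continuous, ‖F‖, F.norm_coe_le_norm⟩).comp
      continuous_subtype_val
  exact (isCompact_range hι).isSeparable.mono fun μ hμ => ⟨⟨μ, subset_closure hμ⟩, rfl⟩

theorem exists_seq_cpCb_eq [PseudoMetrizableSpace Ω] [SeparableSpace Ω] [BorelSpace Ω]
    {Ps : Set (Measure Ω)} (hne : Ps.Nonempty) (hprob : ∀ Q ∈ Ps, IsProbabilityMeasure Q)
    (hcomp : @IsCompact _ (WeakTop Ω) (@closure _ (WeakTop Ω) Ps)) :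
    ∃ P : ℕ → Measure Ω, (∀ n, P n ∈ Ps) ∧
      ∀ p : ℝ, 0 < p → ∀ φ ∈ Cb Ω, cpCb Ps p φ = cpCb (range P) p φ := by
  set S := {μ : ProbabilityMeasure Ω | (μ : Measure Ω) ∈ Ps}
  obtain ⟨t, htS, htc, hSt⟩ :=
    (isSeparable_of_isCompact_closure hprob hcomp).exists_countable_dense_subset
  obtain ⟨Q, hQ⟩ := hne
  obtain ⟨u, rfl⟩ := htc.exists_eq_range
    (closure_nonempty_iff.1 ⟨_, hSt (show ⟨Q, hprob Q hQ⟩ ∈ S from hQ)⟩)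
  have hPs : Ps = (↑) '' S := by
    ext Q
    exact ⟨fun hQ => ⟨⟨Q, hprob Q hQ⟩, hQ, rfl⟩, by rintro ⟨μ, hμ, rfl⟩; exact hμ⟩
  refine ⟨fun n => u n, fun n => htS ⟨n, rfl⟩, fun p hp φ hφ => le_antisymm ?_
    (cpCb_mono (range_subset_iff.2 fun n => htS ⟨n, rfl⟩) φ)⟩
  calc cpCb Ps p φ = cpCb ((↑) '' S) p φ := by rw [← hPs]
    _ ≤ cpCb ((↑) '' range u) p φ := cpCb_image_le_of_subset_closure hSt hp hφ
    _ = cpCb (range fun n => (u n : Measure Ω)) p φ := by rw [← range_comp]; rfl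

end WeakTopology

/-- If `Ω` is Polish and `Ps` is a weakly relatively compact (nonempty)
set of Borel probability measures, there is a countable subset `{P n} ⊆ Ps` such that
for every `p ∈ [1,∞)` and every `X ∈ L^1(c_{p,Ps})`,
`c_{p,Ps}(X) = sup_n E_{P n}(|X|^p)^{1/p}`; in particular the capacities `c_{p,Ps}`
and `c_{p,{P n}}` coincide and the spaces `L^1` coincide. -/
theorem stmt15 {Ω : Type} [TopologicalSpace Ω] [PolishSpace Ω]
    [MeasurableSpace Ω] [BorelSpace Ω]
    (Ps : Set (Measure Ω)) (hne : Ps.Nonempty)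
    (hprob : ∀ Q ∈ Ps, IsProbabilityMeasure Q)
    (hcomp : @IsCompact _ (WeakTop Ω) (@closure _ (WeakTop Ω) Ps)) :
    ∃ P : ℕ → Measure Ω, (∀ n, P n ∈ Ps) ∧
      ∀ p : ℝ, 1 ≤ p →
        (∀ X : Ω → ℝ, MemL1e (cpExt Ps p) X →
          cpExt Ps p X = ⨆ n : ℕ, (∫⁻ x, (ENNReal.ofReal |X x|) ^ p ∂(P n)) ^ (1 / p)) ∧
        cpExt Ps p = cpExt (Set.range P) p ∧
        (∀ X : Ω → ℝ, MemL1e (cpExt Ps p) X ↔ MemL1e (cpExt (Set.range P) p) X) := by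
  obtain ⟨P, hPs, hCb⟩ := exists_seq_cpCb_eq hne hprob hcomp
  refine ⟨P, hPs, fun p hp => ?_⟩
  have hext : cpExt Ps p = cpExt (range P) p := cpExt_congr (hCb p (by linarith))
  refine ⟨fun X hX => ?_, hext, fun X => by rw [hext]⟩
  rw [hext] at hX ⊢
  rw [cpExt_eq_cpCb_of_memL1e hp hX, cpCb, iSup_range]
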